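/- arXiv:1104.4313 — 3 statements merged into one kernel-verified Lean document; each statement's English description precedes it below -/
import Mathlib

section
/- For real z > 0 and real r > 0, the integral of e^{i λ r}/(λ² + z²) over λ ∈ ℝ equals (π/z)·e^{-z r}. -/
/-!
The two-sided exponential `x ↦ e^{-z|x|}` is integrable, and splitting its Fourier integral at `0`
into two one-sided exponential integrals gives `𝓕 (e^{-z|·|}) ξ = 2z / (z² + (2πξ)²)`, again
integrable. Fourier inversion at `r` therefore evaluates `∫ e^{2πiξr} · 2z / (z² + (2πξ)²) dξ` as
`e^{-z|r|}`, and the substitution `λ = 2πξ` turns this into the stated integral.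
-/

open MeasureTheory Real Complex FourierTransform

section

variable {z : ℝ}

lemma exp_neg_mul_abs_mul_cexp_of_nonpos (a : ℝ) {x : ℝ} (hx : x ≤ 0) :
    (rexp (-z * |x|) : ℂ) * cexp (a * x * I) = cexp ((z + a * I) * x) := by
  rw [abs_of_nonpos hx, ofReal_exp, ← Complex.exp_add]
  push_cast
  ring_nf

lemma exp_neg_mul_abs_mul_cexp_of_nonneg (a : ℝ) {x : ℝ} (hx : 0 ≤ x) :
    (rexp (-z * |x|) : ℂ) * cexp (a * x * I) = cexp ((-z + a * I) * x) := by
  rw [abs_of_nonneg hx, ofReal_exp, ← Complex.exp_add]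
  push_cast
  ring_nf

lemma integrableOn_exp_neg_mul_abs_mul_cexp_Iic (hz : 0 < z) (a : ℝ) :
    IntegrableOn (fun x : ℝ ↦ (rexp (-z * |x|) : ℂ) * cexp (a * x * I)) (Set.Iic 0) :=
  (integrableOn_exp_mul_complex_Iic (by simpa using hz) 0).congr_fun
    (fun _ hx ↦ (exp_neg_mul_abs_mul_cexp_of_nonpos a hx).symm) measurableSet_Iic

lemma integrableOn_exp_neg_mul_abs_mul_cexp_Ioi (hz : 0 < z) (a : ℝ) :
    IntegrableOn (fun x : ℝ ↦ (rexp (-z * |x|) : ℂ) * cexp (a * x * I)) (Set.Ioi 0) :=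
  (integrableOn_exp_mul_complex_Ioi (by simpa using hz) 0).congr_fun
    (fun _ hx ↦ (exp_neg_mul_abs_mul_cexp_of_nonneg a (hx.le)).symm) measurableSet_Ioi

lemma integral_exp_neg_mul_abs_mul_cexp (hz : 0 < z) (a : ℝ) :
    ∫ x : ℝ, (rexp (-z * |x|) : ℂ) * cexp (a * x * I) = ((2 * z / (z ^ 2 + a ^ 2) : ℝ) : ℂ) := by
  rw [← intervalIntegral.integral_Iic_add_Ioi (integrableOn_exp_neg_mul_abs_mul_cexp_Iic hz a)
      (integrableOn_exp_neg_mul_abs_mul_cexp_Ioi hz a),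
    setIntegral_congr_fun measurableSet_Iic (fun _ hx ↦ exp_neg_mul_abs_mul_cexp_of_nonpos a hx),
    setIntegral_congr_fun measurableSet_Ioi
      (fun _ hx ↦ exp_neg_mul_abs_mul_cexp_of_nonneg a (hx.le)),
    integral_exp_mul_complex_Iic (by simpa using hz),
    integral_exp_mul_complex_Ioi (by simpa using hz)]
  have h1 : (z : ℂ) + a * I ≠ 0 := fun h ↦ by simpa [hz.ne'] using congrArg re h
  have h2 : -(z : ℂ) + a * I ≠ 0 := fun h ↦ by simpa [hz.ne'] using congrArg re h
  have h3 : (z : ℂ) ^ 2 + a ^ 2 ≠ 0 := by exact_mod_cast (by positivity : z ^ 2 + a ^ 2 ≠ 0)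
  simp only [ofReal_zero, mul_zero, Complex.exp_zero]
  push_cast
  field_simp
  linear_combination (-2 * (z : ℂ) * a ^ 2) * I_sq

lemma integrable_exp_neg_mul_abs (hz : 0 < z) :
    Integrable (fun x : ℝ ↦ (rexp (-z * |x|) : ℂ)) := by
  have h := (integrableOn_exp_neg_mul_abs_mul_cexp_Iic hz 0).union
    (integrableOn_exp_neg_mul_abs_mul_cexp_Ioi hz 0)
  simpa using h

lemma fourier_exp_neg_mul_abs (hz : 0 < z) (ξ : ℝ) :
    𝓕 (fun x : ℝ ↦ (rexp (-z * |x|) : ℂ)) ξ = ((2 * z / (z ^ 2 + (2 * π * ξ) ^ 2) : ℝ) : ℂ) := by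
  rw [Real.fourier_real_eq_integral_exp_smul, ← neg_sq (2 * π * ξ),
    ← integral_exp_neg_mul_abs_mul_cexp hz]
  congr 1 with x
  rw [smul_eq_mul, mul_comm]
  push_cast
  ring_nf

lemma integrable_two_mul_div_sq_add_sq (hz : 0 < z) :
    Integrable (fun ξ : ℝ ↦ ((2 * z / (z ^ 2 + (2 * π * ξ) ^ 2) : ℝ) : ℂ)) := by
  have h : Integrable (fun ξ : ℝ ↦ 2 * z / (z ^ 2 + (2 * π * ξ) ^ 2)) :=
    ((integrable_inv_one_add_sq.comp_mul_left' (R := 2 * π / z) (by positivity)).const_mul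
      (2 / z)).congr (Filter.Eventually.of_forall fun ξ ↦ by field_simp)
  exact h.ofReal

lemma integral_cexp_mul_two_mul_div_sq_add_sq (hz : 0 < z) (r : ℝ) :
    ∫ ξ : ℝ, cexp (↑(2 * π * ξ * r) * I) * ((2 * z / (z ^ 2 + (2 * π * ξ) ^ 2) : ℝ) : ℂ)
      = (rexp (-z * |r|) : ℂ) := by
  have hF : Integrable (𝓕 fun x : ℝ ↦ (rexp (-z * |x|) : ℂ)) :=
    (integrable_two_mul_div_sq_add_sq hz).congr
      (Filter.Eventually.of_forall fun ξ ↦ (fourier_exp_neg_mul_abs hz ξ).symm)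
  have hinv := (integrable_exp_neg_mul_abs hz).fourierInv_fourier_eq hF
    (by fun_prop : Continuous fun x : ℝ ↦ (rexp (-z * |x|) : ℂ)).continuousAt (v := r)
  rw [← hinv, Real.fourierInv_eq']
  congr 1 with ξ
  rw [fourier_exp_neg_mul_abs hz, smul_eq_mul, Real.inner_apply]
  ring_nf

lemma integral_cexp_mul_div_sq_add_sq (hz : 0 < z) (r : ℝ) :
    ∫ lam : ℝ, cexp (I * lam * r) / ((lam : ℂ) ^ 2 + (z : ℂ) ^ 2)
      = ((π / z) * rexp (-z * |r|) : ℝ) := by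
  have hz' : (z : ℂ) ≠ 0 := ofReal_ne_zero.mpr hz.ne'
  have hrescale (ξ : ℝ) : cexp (I * ↑(2 * π * ξ) * r) / (↑(2 * π * ξ) ^ 2 + (z : ℂ) ^ 2)
      = (2 * z : ℂ)⁻¹ * (cexp (↑(2 * π * ξ * r) * I)
        * ((2 * z / (z ^ 2 + (2 * π * ξ) ^ 2) : ℝ) : ℂ)) := by
    have hden : ((z ^ 2 + (2 * π * ξ) ^ 2 : ℝ) : ℂ) ≠ 0 := ofReal_ne_zero.mpr (by positivity)
    push_cast at hden ⊢
    field_simp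
    ring
  have h := Measure.integral_comp_mul_left
    (fun lam : ℝ ↦ cexp (I * lam * r) / ((lam : ℂ) ^ 2 + (z : ℂ) ^ 2)) (2 * π)
  simp only [hrescale, integral_const_mul, integral_cexp_mul_two_mul_div_sq_add_sq hz,
    abs_of_pos (by positivity : (0 : ℝ) < (2 * π)⁻¹)] at h
  rw [eq_inv_smul_iff₀ (by positivity), Complex.real_smul] at h
  rw [← h]
  push_cast
  field_simp

end

/-- For z > 0 and r > 0, ∫_ℝ e^{iλr}/(λ²+z²) dλ = (π/z)·e^{-zr}. -/
theorem stmt3 (z r : ℝ) (hz : 0 < z) (hr : 0 < r) :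
    ∫ lam : ℝ, Complex.exp (Complex.I * lam * r) / ((lam : ℂ) ^ 2 + (z : ℂ) ^ 2)
      = ((π / z) * Real.exp (-z * r) : ℝ) := by
  rw [integral_cexp_mul_div_sq_add_sq hz, abs_of_pos hr]
end

section
/- Let V = ℝⁿ with its standard inner product, let α₁,…,α_d ∈ V be nonzero vectors such that Σ_{j≠k} ⟨α_j, α_k⟩ / (α_j α_k) = 0 as a rational function (equivalently, Σ_{j≠k} ⟨α_j,α_k⟩ · Π_{i≠j,k} ℓ_{α_i} = 0 in the polynomial ring, where ℓ_α(x) = ⟨α,x⟩). Then the polynomial π(x) = Π_{j=1}^d ⟨α_j, x⟩ is harmonic: Δπ = 0. -/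
/-!
The linear forms `ℓ_α` have constant partial derivatives `∂_k ℓ_α = α_k`, so applying the Leibniz
rule twice gives `∂_k² Π_j ℓ_{α_j} = Σ_{j ≠ m} α_{j,k} α_{m,k} Π_{i ≠ j,m} ℓ_{α_i}`. Summing over `k`
turns the coefficient into `⟨α_j, α_m⟩`, so `Δπ` is exactly the polynomial assumed to vanish.
-/

open MvPolynomial
open scoped RealInnerProductSpace

theorem Derivation.leibniz_prod {R A M : Type*} [CommSemiring R] [CommSemiring A] [Algebra R A]
    [AddCommMonoid M] [Module A M] [Module R M] {ι : Type*} [DecidableEq ι]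
    (D : Derivation R A M) (s : Finset ι) (f : ι → A) :
    D (∏ j ∈ s, f j) = ∑ j ∈ s, (∏ i ∈ s.erase j, f i) • D (f j) := by
  induction s using Finset.induction_on with
  | empty => simp
  | insert a s ha ih =>
    rw [Finset.prod_insert ha, leibniz, ih, Finset.sum_insert ha, Finset.erase_insert ha,
      Finset.smul_sum, add_comm]
    congr 1
    refine Finset.sum_congr rfl fun b hb => ?_
    rw [Finset.erase_insert_of_ne (ne_of_mem_of_not_mem hb ha).symm, Finset.prod_insert
      (fun h => ha (Finset.mem_of_mem_erase h)), mul_smul]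

namespace MvPolynomial

variable {R σ : Type*} [CommSemiring R] [Fintype σ]

noncomputable def linearForm (a : σ → R) : MvPolynomial σ R := ∑ k, C (a k) * X k

theorem pderiv_linearForm [DecidableEq σ] (a : σ → R) (k : σ) :
    pderiv k (linearForm a) = C (a k) := by
  simp [linearForm, pderiv_X, Pi.single_apply]

theorem laplacian_prod_linearForm [DecidableEq σ] {ι : Type*} [DecidableEq ι] (s : Finset ι)
    (a : ι → σ → R) :
    ∑ k, pderiv k (pderiv k (∏ j ∈ s, linearForm (a j))) =
      ∑ j ∈ s, ∑ m ∈ s.erase j,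
        C (∑ k, a j k * a m k) * ∏ i ∈ (s.erase j).erase m, linearForm (a i) := by
  have pderiv_prod : ∀ k (t : Finset ι), pderiv k (∏ j ∈ t, linearForm (a j)) =
      ∑ j ∈ t, C (a j k) * ∏ i ∈ t.erase j, linearForm (a i) := fun k t => by
    rw [Derivation.leibniz_prod]
    exact Finset.sum_congr rfl fun j _ => by rw [pderiv_linearForm, smul_eq_mul, mul_comm]
  have pderiv_pderiv_prod : ∀ k, pderiv k (pderiv k (∏ j ∈ s, linearForm (a j))) =
      ∑ j ∈ s, ∑ m ∈ s.erase j,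
        C (a j k * a m k) * ∏ i ∈ (s.erase j).erase m, linearForm (a i) := fun k => by
    rw [pderiv_prod, map_sum]
    refine Finset.sum_congr rfl fun j _ => ?_
    rw [pderiv_C_mul, pderiv_prod, Finset.mul_sum]
    exact Finset.sum_congr rfl fun m _ => by rw [C_mul, mul_assoc]
  simp only [pderiv_pderiv_prod, map_sum, Finset.sum_mul]
  rw [Finset.sum_comm]
  refine Finset.sum_congr rfl fun j _ => Finset.sum_comm

end MvPolynomial

theorem stmt8_general {n d : ℕ} (α : Fin d → EuclideanSpace ℝ (Fin n))
    (h : ∑ p ∈ Finset.univ.filter (fun p : Fin d × Fin d => p.1 ≠ p.2),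
          C (⟪α p.1, α p.2⟫ : ℝ) *
            ∏ i ∈ Finset.univ.filter (fun i : Fin d => i ≠ p.1 ∧ i ≠ p.2),
              (∑ k : Fin n, C (α i k) * X k) = (0 : MvPolynomial (Fin n) ℝ)) :
    ∑ k : Fin n, pderiv k (pderiv k (∏ j : Fin d, ∑ k : Fin n, C (α j k) * X k))
      = (0 : MvPolynomial (Fin n) ℝ) := by
  have inner_eq : ∀ j m, ⟪α j, α m⟫ = ∑ k, α j k * α m k := fun j m => by
    simp [PiLp.inner_apply, mul_comm]
  have erase_erase : ∀ j m : Fin d,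
      (Finset.univ.erase j).erase m = Finset.univ.filter (fun i => i ≠ j ∧ i ≠ m) := fun j m => by
    ext i; simp [and_comm]
  rw [← h, Finset.sum_finset_product _ Finset.univ (fun j => Finset.univ.erase j)
      fun p => by simp [eq_comm]]
  exact (laplacian_prod_linearForm Finset.univ fun j => ⇑(α j)).trans <|
    Finset.sum_congr rfl fun j _ => Finset.sum_congr rfl fun m _ => by
      rw [inner_eq, erase_erase]; rfl

/-- If α₁,…,α_d ∈ ℝⁿ are nonzero and Σ_{j≠k} ⟨α_j,α_k⟩ Π_{i≠j,k} ℓ_{α_i} = 0 in the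
polynomial ring (with ℓ_α(x) = ⟨α,x⟩), then π(x) = Π_j ⟨α_j,x⟩ is harmonic. -/
theorem stmt8 {n d : ℕ} (α : Fin d → EuclideanSpace ℝ (Fin n))
    (hα : ∀ j, α j ≠ 0)
    (h : ∑ p ∈ Finset.univ.filter (fun p : Fin d × Fin d => p.1 ≠ p.2),
          C (⟪α p.1, α p.2⟫ : ℝ) *
            ∏ i ∈ Finset.univ.filter (fun i : Fin d => i ≠ p.1 ∧ i ≠ p.2),
              (∑ k : Fin n, C (α i k) * X k) = (0 : MvPolynomial (Fin n) ℝ)) :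
    ∑ k : Fin n, pderiv k (pderiv k (∏ j : Fin d, ∑ k : Fin n, C (α j k) * X k))
      = (0 : MvPolynomial (Fin n) ℝ) :=
  stmt8_general α h
end

section
/- For integers ν, d, n with 2(ν-d) > n and real z > 0, y ∈ ℝⁿ: ∫_{ℝⁿ} e^{i⟨λ,y⟩}/(|λ|²+z²)^{ν-d} dλ = (π^{(n-1)/2} Γ(ν-d-(n-1)/2)/Γ(ν-d)) · ∫_ℝ e^{i λ₁ |y|}/(λ₁²+z²)^{ν-d-(n-1)/2} dλ₁. -/
/-!
Subordination: `(‖x‖² + a)^{-s} = Γ(s)⁻¹ ∫_{t > 0} t^{s-1} e^{-t(‖x‖² + a)} dt`. Inserting this into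
the Fourier integral over a `k`-dimensional space, exchanging the integrals (Fubini, which needs
`s > k/2` for `∫ t^{s-k/2-1} e^{-at} dt` to converge) and evaluating the Gaussian Fourier integral
`∫ e^{-t‖x‖² + i⟪y, x⟫} dx = (π/t)^{k/2} e^{-‖y‖²/4t}` gives
`π^{k/2} Γ(s)⁻¹ ∫_{t > 0} t^{s-k/2-1} e^{-at - ‖y‖²/4t} dt`.
This `t`-integral depends on `k` and `s` only through `s - k/2`, so the `n`-dimensional integral
with exponent `s` and the one-dimensional one with exponent `s - (n-1)/2` are both multiples of the
same number, and comparing the constants gives the theorem.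
-/

open MeasureTheory
open scoped RealInnerProductSpace

open Real Set Module
open scoped Complex

theorem rpow_sub_one_mul_pi_div_rpow {s t : ℝ} (ht : 0 < t) (k : ℝ) :
    t ^ (s - 1) * (π / t) ^ (k / 2) = π ^ (k / 2) * t ^ (s - k / 2 - 1) := by
  rw [div_rpow pi_pos.le ht.le, sub_right_comm, rpow_sub ht _ (k / 2)]
  ring

section
variable {V : Type*} [NormedAddCommGroup V] [InnerProductSpace ℝ V]

noncomputable def subordinationKernel (s a : ℝ) (y : V) (p : ℝ × V) : ℂ :=
  ((p.1 ^ (s - 1) * rexp (-((‖p.2‖ ^ 2 + a) * p.1)) : ℝ) : ℂ) * cexp (Complex.I * ⟪p.2, y⟫)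

variable (s a : ℝ) (y : V)

theorem subordinationKernel_eq (t : ℝ) (x : V) :
    subordinationKernel s a y (t, x)
      = ((t ^ (s - 1) * rexp (-(a * t)) : ℝ) : ℂ)
          * cexp (-(t : ℂ) * ‖x‖ ^ 2 + Complex.I * ⟪y, x⟫) := by
  rw [subordinationKernel, Complex.exp_add, real_inner_comm, ← mul_assoc]
  congr 1
  push_cast
  rw [mul_assoc, ← Complex.exp_add]
  ring_nf

theorem norm_subordinationKernel {t : ℝ} (ht : 0 < t) (x : V) :
    ‖subordinationKernel s a y (t, x)‖ = t ^ (s - 1) * rexp (-(a * t)) * rexp (-t * ‖x‖ ^ 2) := by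
  rw [subordinationKernel, norm_mul, Complex.norm_exp_I_mul_ofReal, mul_one, Complex.norm_real,
    Real.norm_of_nonneg (by positivity), mul_assoc, ← Real.exp_add]
  ring_nf

variable {s a}

theorem integral_subordinationKernel_fst (hs : 0 < s) (ha : 0 < a) (x : V) :
    ∫ t in Ioi 0, subordinationKernel s a y (t, x)
      = ((Gamma s * (‖x‖ ^ 2 + a) ^ (-s) : ℝ) : ℂ) * cexp (Complex.I * ⟪x, y⟫) := by
  have hq : 0 < ‖x‖ ^ 2 + a := by positivity
  simp only [subordinationKernel]
  rw [integral_mul_const, integral_complex_ofReal, integral_rpow_mul_exp_neg_mul_Ioi hs hq, one_div,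
    inv_rpow hq.le, rpow_neg hq.le, mul_comm (Gamma s)]

variable [FiniteDimensional ℝ V] [MeasurableSpace V] [BorelSpace V]

theorem integral_cexp_neg_mul_sq_norm_add_I_mul_inner {t : ℝ} (ht : 0 < t) :
    ∫ x : V, cexp (-(t : ℂ) * ‖x‖ ^ 2 + Complex.I * ⟪y, x⟫)
      = (((π / t) ^ ((finrank ℝ V : ℝ) / 2) * rexp (-(‖y‖ ^ 2 / (4 * t))) : ℝ) : ℂ) := by
  rw [GaussianFourier.integral_cexp_neg_mul_sq_norm_add (by simpa using ht), Complex.ofReal_mul,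
    Complex.ofReal_cpow (by positivity), Complex.ofReal_exp]
  push_cast
  rw [Complex.I_sq]
  ring_nf

variable (s a)

theorem integral_subordinationKernel_snd {t : ℝ} (ht : 0 < t) :
    ∫ x : V, subordinationKernel s a y (t, x)
      = ((π ^ ((finrank ℝ V : ℝ) / 2)
          * (t ^ (s - finrank ℝ V / 2 - 1) * rexp (-(a * t) - ‖y‖ ^ 2 / (4 * t))) : ℝ) : ℂ) := by
  simp_rw [subordinationKernel_eq]
  rw [integral_const_mul, integral_cexp_neg_mul_sq_norm_add_I_mul_inner y ht, ← Complex.ofReal_mul,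
    sub_eq_add_neg (-(a * t)), Real.exp_add]
  congr 1
  linear_combination rexp (-(a * t)) * rexp (-(‖y‖ ^ 2 / (4 * t)))
    * rpow_sub_one_mul_pi_div_rpow (s := s) ht (finrank ℝ V)

theorem integral_norm_subordinationKernel_snd {t : ℝ} (ht : 0 < t) :
    ∫ x : V, ‖subordinationKernel s a y (t, x)‖
      = π ^ ((finrank ℝ V : ℝ) / 2) * (t ^ (s - finrank ℝ V / 2 - 1) * rexp (-(a * t))) := by
  simp_rw [norm_subordinationKernel s a y ht]
  rw [integral_const_mul, GaussianFourier.integral_rexp_neg_mul_sq_norm ht]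
  linear_combination rexp (-(a * t)) * rpow_sub_one_mul_pi_div_rpow (s := s) ht (finrank ℝ V)

variable {s a}

theorem integrable_subordinationKernel (hs : (finrank ℝ V : ℝ) / 2 < s) (ha : 0 < a) :
    Integrable (subordinationKernel s a y) ((volume.restrict (Ioi 0)).prod volume) := by
  have hmeas : AEStronglyMeasurable (subordinationKernel s a y)
      ((volume.restrict (Ioi 0)).prod volume) := by
    unfold subordinationKernel
    fun_prop
  refine (integrable_prod_iff hmeas).2 ⟨?_, ?_⟩
  · filter_upwards [ae_restrict_mem measurableSet_Ioi] with t ht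
    simp_rw [subordinationKernel_eq]
    exact (GaussianFourier.integrable_cexp_neg_mul_sq_norm_add (by simpa using ht) _ y).const_mul _
  · have hGamma : IntegrableOn (fun t : ℝ => t ^ (s - finrank ℝ V / 2 - 1) * rexp (-(a * t)))
        (Ioi 0) := by
      simpa using integrableOn_rpow_mul_exp_neg_mul_rpow (p := 1) (by linarith) one_pos ha
    exact IntegrableOn.congr_fun (hGamma.const_mul _)
      (fun t ht => (integral_norm_subordinationKernel_snd s a y ht).symm) measurableSet_Ioi

theorem integral_cexp_I_mul_inner_div_rpow_norm_sq_add
    (hs : (finrank ℝ V : ℝ) / 2 < s) (ha : 0 < a) :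
    ∫ x : V, cexp (Complex.I * ⟪x, y⟫) / (((‖x‖ ^ 2 + a) ^ s : ℝ) : ℂ)
      = ((π ^ ((finrank ℝ V : ℝ) / 2) / Gamma s
          * ∫ t in Ioi 0, t ^ (s - finrank ℝ V / 2 - 1) * rexp (-(a * t) - ‖y‖ ^ 2 / (4 * t))
          : ℝ) : ℂ) := by
  have hs₀ : 0 < s := lt_of_le_of_lt (by positivity) hs
  have hΓ : (Gamma s : ℂ) ≠ 0 := Complex.ofReal_ne_zero.2 (Gamma_pos_of_pos hs₀).ne'
  calc ∫ x : V, cexp (Complex.I * ⟪x, y⟫) / (((‖x‖ ^ 2 + a) ^ s : ℝ) : ℂ)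
      = ∫ x : V, (Gamma s : ℂ)⁻¹ * ∫ t in Ioi 0, subordinationKernel s a y (t, x) := by
        refine integral_congr_ae (ae_of_all _ fun x => ?_)
        dsimp only
        rw [integral_subordinationKernel_fst y hs₀ ha, rpow_neg (by positivity)]
        push_cast
        field_simp
    _ = (Gamma s : ℂ)⁻¹ * ∫ t in Ioi 0, ∫ x : V, subordinationKernel s a y (t, x) := by
        rw [integral_const_mul, integral_integral_swap
          (f := fun t x => subordinationKernel s a y (t, x)) (integrable_subordinationKernel y hs ha)]
    _ = _ := by
        rw [setIntegral_congr_fun measurableSet_Ioi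
          (fun t ht => integral_subordinationKernel_snd s a y ht), integral_complex_ofReal,
          integral_const_mul]
        push_cast
        ring

end

theorem integral_cexp_I_mul_mul_div_rpow_sq_add {s a : ℝ} (hs : 1 / 2 < s) (ha : 0 < a) (r : ℝ) :
    ∫ l : ℝ, cexp (Complex.I * l * r) / (((l ^ 2 + a) ^ s : ℝ) : ℂ)
      = ((π ^ (1 / 2 : ℝ) / Gamma s
          * ∫ t in Ioi 0, t ^ (s - 1 / 2 - 1) * rexp (-(a * t) - r ^ 2 / (4 * t)) : ℝ) : ℂ) := by
  have h := integral_cexp_I_mul_inner_div_rpow_norm_sq_add r (by simpa using hs) ha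
  simp only [finrank_self, Nat.cast_one, norm_eq_abs, sq_abs] at h
  rw [← h]
  refine integral_congr_ae (ae_of_all _ fun l => ?_)
  simp only [RCLike.inner_apply, ringHom_apply, Complex.ofReal_mul]
  ring_nf

/-- Reduction to one dimension: for integers ν, d with 2(ν-d) > n and z > 0,
∫_{ℝⁿ} e^{i⟨λ,y⟩}/(|λ|²+z²)^{ν-d} dλ
  = π^{(n-1)/2} (Γ(ν-d-(n-1)/2)/Γ(ν-d)) ∫_ℝ e^{iλ₁|y|}/(λ₁²+z²)^{ν-d-(n-1)/2} dλ₁. -/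
theorem stmt11 {n : ℕ} (ν d : ℤ) (hn : (n : ℤ) < 2 * (ν - d)) (z : ℝ) (hz : 0 < z)
    (y : EuclideanSpace ℝ (Fin n)) :
    ∫ lam : EuclideanSpace ℝ (Fin n),
        Complex.exp (Complex.I * (⟪lam, y⟫ : ℝ))
          / (((‖lam‖ ^ 2 + z ^ 2) ^ (((ν - d : ℤ) : ℝ)) : ℝ) : ℂ)
      = ((Real.pi ^ (((n : ℝ) - 1) / 2) *
            Real.Gamma (((ν - d : ℤ) : ℝ) - ((n : ℝ) - 1) / 2)
            / Real.Gamma (((ν - d : ℤ) : ℝ)) : ℝ) : ℂ) *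
          ∫ l : ℝ, Complex.exp (Complex.I * l * ‖y‖)
            / (((l ^ 2 + z ^ 2) ^ ((((ν - d : ℤ) : ℝ)) - ((n : ℝ) - 1) / 2) : ℝ) : ℂ) := by
  set s : ℝ := ((ν - d : ℤ) : ℝ)
  have hs : (n : ℝ) / 2 < s := by
    have : (n : ℝ) < 2 * s := by simp only [s]; exact_mod_cast hn
    linarith
  have hz2 : 0 < z ^ 2 := by positivity
  have hΓ : Gamma (s - (n - 1) / 2) ≠ 0 := (Gamma_pos_of_pos (by linarith)).ne'
  have hLHS := integral_cexp_I_mul_inner_div_rpow_norm_sq_add y (by simpa using hs) hz2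
  rw [finrank_euclideanSpace_fin] at hLHS
  rw [hLHS, integral_cexp_I_mul_mul_div_rpow_sq_add (by linarith) hz2,
    show s - (n - 1) / 2 - 1 / 2 = s - n / 2 by ring, ← Complex.ofReal_mul, ← mul_assoc]
  congr 2
  have hπ : π ^ (((n : ℝ) - 1) / 2) * π ^ (1 / 2 : ℝ) = π ^ ((n : ℝ) / 2) := by
    rw [← rpow_add pi_pos]
    ring_nf
  rw [← hπ]
  generalize Gamma (s - (n - 1) / 2) = g at hΓ ⊢
  field_simp
end
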